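/- Let G be a finite group and m > 1. If g ∈ G^m has weight 2 (that is, g = x_{[k,l)} · y_{[l,s)} with x ≠ e, y ≠ e, x ≠ y, 1 ≤ k < l < s ≤ m+1), then the number of common neighbours of e and g in G_m(G) is exactly 6, namely y_{[l,s)}, y_{[k,s)}, x_{[k,l)}, x_{[k,s)}, (x^{-1}y)_{[l,s)}, (y^{-1}x)_{[k,l)}. -/

import Mathlib

/-
A vertex adjacent to both `e` and `g` is a generator `v = q_{[a,b)}` with `v g⁻¹ = w_{[c,d)}`, so
`g = p_{[c,d)} q_{[a,b)}` with `p = w⁻¹`. Extend vectors by `e` to all positions and call `j` a jump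
of `f` when `f (j - 1) ≠ f j`. A block `p_{[c,d)}` jumps exactly at `c` and `d`, while `g` jumps
exactly at `k`, `l`, `s` (at `l` because `x ≠ y`). A product jumps wherever exactly one factor
does, and only where some factor does; counting then forces `{c, d}` and `{a, b}` to be distinct
pairs in `{k, l, s}`. These six configurations, with the values of `g` at `k` and `l`, give the
six neighbours; they are distinct because the jumps of a generator recover its interval.
-/

namespace CayleyStmt5

variable {G : Type*}

def intvl [Group G] (m : ℕ) (x : G) (k l : ℕ) : Fin m → G :=
  fun i => if k ≤ i.1 + 1 ∧ i.1 + 1 < l then x else 1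

def cS (G : Type*) [Group G] (m : ℕ) : Set (Fin m → G) :=
  {v | ∃ (x : G) (k l : ℕ), x ≠ 1 ∧ 1 ≤ k ∧ k < l ∧ l ≤ m + 1 ∧ v = intvl m x k l}

def cAdj [Group G] (m : ℕ) (g h : Fin m → G) : Prop := h * g⁻¹ ∈ cS G m

section Blocks

variable [Group G]

noncomputable def block (x : G) (k l : ℕ) : ℕ → G := (Set.Ico k l).mulIndicator fun _ => x

def JumpsAt (f : ℕ → G) (j : ℕ) : Prop := f (j - 1) ≠ f j

variable {f g : ℕ → G} {j : ℕ}

lemma jumpsAt_mul_iff_left (hg : ¬JumpsAt g j) : JumpsAt (f * g) j ↔ JumpsAt f j := by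
  rw [JumpsAt, not_not] at hg
  simp [JumpsAt, hg]

lemma jumpsAt_mul_iff_right (hf : ¬JumpsAt f j) : JumpsAt (f * g) j ↔ JumpsAt g j := by
  rw [JumpsAt, not_not] at hf
  simp [JumpsAt, hf]

lemma JumpsAt.of_mul (h : JumpsAt (f * g) j) : JumpsAt f j ∨ JumpsAt g j := by
  by_contra! hfg
  exact hfg.1 ((jumpsAt_mul_iff_left hfg.2).mp h)

variable {x y p q : G} {k l s a b c d : ℕ}

lemma jumpsAt_block_iff (hx : x ≠ 1) (hk : 1 ≤ k) (hkl : k < l) :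
    JumpsAt (block x k l) j ↔ j = k ∨ j = l := by
  simp only [JumpsAt, block, Set.mulIndicator_apply, Set.mem_Ico]
  split_ifs <;> first | omega | simp [hx, hx.symm]; omega

lemma jumpsAt_block_mul_block_iff (hx : x ≠ 1) (hy : y ≠ 1) (hxy : x ≠ y)
    (hk : 1 ≤ k) (hkl : k < l) (hls : l < s) :
    JumpsAt (block x k l * block y l s) j ↔ j = k ∨ j = l ∨ j = s := by
  simp only [JumpsAt, block, Pi.mul_apply, Set.mulIndicator_apply, Set.mem_Ico]
  split_ifs <;> first | omega | simp [hy, hxy, hx.symm]; omega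

lemma endpoints_of_block_mul_block_eq (hx : x ≠ 1) (hy : y ≠ 1) (hxy : x ≠ y)
    (hp : p ≠ 1) (hq : q ≠ 1) (hk : 1 ≤ k) (hkl : k < l) (hls : l < s)
    (hc : 1 ≤ c) (hcd : c < d) (ha : 1 ≤ a) (hab : a < b)
    (h : block x k l * block y l s = block p c d * block q a b) :
    (c = k ∧ d = l ∧ a = l ∧ b = s) ∨ (c = k ∧ d = l ∧ a = k ∧ b = s) ∨
    (c = l ∧ d = s ∧ a = k ∧ b = l) ∨ (c = l ∧ d = s ∧ a = k ∧ b = s) ∨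
    (c = k ∧ d = s ∧ a = k ∧ b = l) ∨ (c = k ∧ d = s ∧ a = l ∧ b = s) := by
  have jump_g (j) := jumpsAt_block_mul_block_iff (j := j) hx hy hxy hk hkl hls
  have jump_p (j) := jumpsAt_block_iff (j := j) hp hc hcd
  have jump_q (j) := jumpsAt_block_iff (j := j) hq ha hab
  rw [h] at jump_g
  have covered (j) (hj : j = k ∨ j = l ∨ j = s) : (j = c ∨ j = d) ∨ (j = a ∨ j = b) := by
    rw [← jump_p, ← jump_q]
    exact JumpsAt.of_mul ((jump_g j).mpr hj)
  have shared_or_p (j) (hj : j = c ∨ j = d) : (j = a ∨ j = b) ∨ (j = k ∨ j = l ∨ j = s) := by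
    rw [← jump_p] at hj
    rw [← jump_q, ← jump_g]
    exact or_iff_not_imp_left.mpr fun hq => (jumpsAt_mul_iff_left hq).mpr hj
  have shared_or_q (j) (hj : j = a ∨ j = b) : (j = c ∨ j = d) ∨ (j = k ∨ j = l ∨ j = s) := by
    rw [← jump_q] at hj
    rw [← jump_p, ← jump_g]
    exact or_iff_not_imp_left.mpr fun hp => (jumpsAt_mul_iff_right hp).mpr hj
  have cov_k := covered k (by simp)
  have cov_l := covered l (by simp)
  have cov_s := covered s (by simp)
  have at_c := shared_or_p c (by simp)
  have at_d := shared_or_p d (by simp)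
  have at_a := shared_or_q a (by simp)
  have at_b := shared_or_q b (by simp)
  -- An endpoint outside `{k, l, s}` would be shared, leaving at most two points to cover `k, l, s`.
  obtain ⟨c_eq | c_eq | c_eq, d_eq | d_eq | d_eq, a_eq | a_eq | a_eq, b_eq | b_eq | b_eq, hne⟩ :
      (c = k ∨ c = l ∨ c = s) ∧ (d = k ∨ d = l ∨ d = s) ∧ (a = k ∨ a = l ∨ a = s) ∧
        (b = k ∨ b = l ∨ b = s) ∧ ¬(c = a ∧ d = b) :=
    ⟨by omega, by omega, by omega, by omega, by omega⟩
  clear cov_k cov_l cov_s at_c at_d at_a at_b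
  all_goals subst_vars; first | (exfalso; omega) | simp

lemma right_factor_of_block_mul_block_eq (hx : x ≠ 1) (hy : y ≠ 1) (hxy : x ≠ y)
    (hp : p ≠ 1) (hq : q ≠ 1) (hk : 1 ≤ k) (hkl : k < l) (hls : l < s)
    (hc : 1 ≤ c) (hcd : c < d) (ha : 1 ≤ a) (hab : a < b)
    (h : block x k l * block y l s = block p c d * block q a b) :
    (a = l ∧ b = s ∧ q = y) ∨ (a = k ∧ b = s ∧ q = y) ∨ (a = k ∧ b = l ∧ q = x) ∨
    (a = k ∧ b = s ∧ q = x) ∨ (a = l ∧ b = s ∧ q = x⁻¹ * y) ∨ (a = k ∧ b = l ∧ q = y⁻¹ * x) := by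
  have at_k := congrFun h k
  have at_l := congrFun h l
  simp only [block, Pi.mul_apply, Set.mulIndicator_apply, Set.mem_Ico] at at_k at_l
  rcases endpoints_of_block_mul_block_eq hx hy hxy hp hq hk hkl hls hc hcd ha hab h with
    ⟨rfl, rfl, rfl, rfl⟩ | ⟨rfl, rfl, rfl, rfl⟩ | ⟨rfl, rfl, rfl, rfl⟩ | ⟨rfl, rfl, rfl, rfl⟩ |
    ⟨rfl, rfl, rfl, rfl⟩ | ⟨rfl, rfl, rfl, rfl⟩ <;>
    simp (disch := omega) only [if_pos, if_neg, mul_one, one_mul] at at_k at_l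
  all_goals subst_vars; simp_all

end Blocks

section Coordinates

variable [Group G] {m : ℕ} {x x' y z w : G} {k k' l l' s a b c d : ℕ}

/-- Positions are 1-based, as in `intvl`: position `j` holds coordinate `j - 1`. -/
def extendByOne (m : ℕ) : (Fin m → G) →* (ℕ → G) where
  toFun v j := if h : 1 ≤ j ∧ j ≤ m then v ⟨j - 1, by omega⟩ else 1
  map_one' := by ext; simp
  map_mul' v w := by ext j; simp only [Pi.mul_apply]; split_ifs <;> simp

lemma extendByOne_intvl (hk : 1 ≤ k) (hl : l ≤ m + 1) :
    extendByOne m (intvl m x k l) = block x k l := by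
  ext j
  simp only [extendByOne, MonoidHom.coe_mk, OneHom.coe_mk, intvl, block,
    Set.mulIndicator_apply, Set.mem_Ico]
  split_ifs <;> first | rfl | omega

lemma intvl_inv : (intvl m x k l)⁻¹ = intvl m x⁻¹ k l := by
  ext i
  simp only [intvl, Pi.inv_apply]
  split_ifs <;> simp

lemma eq_of_intvl_eq (hx : x ≠ 1) (hx' : x' ≠ 1) (hk : 1 ≤ k) (hkl : k < l) (hl : l ≤ m + 1)
    (hk' : 1 ≤ k') (hkl' : k' < l') (hl' : l' ≤ m + 1) (h : intvl m x k l = intvl m x' k' l') :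
    x = x' ∧ k = k' ∧ l = l' := by
  have hb := congrArg (extendByOne m) h
  rw [extendByOne_intvl hk hl, extendByOne_intvl hk' hl'] at hb
  have jumps (j) : j = k ∨ j = l ↔ j = k' ∨ j = l' := by
    rw [← jumpsAt_block_iff hx hk hkl, ← jumpsAt_block_iff hx' hk' hkl', hb]
  have := (jumps k).mp (by simp); have := (jumps l).mp (by simp)
  have := (jumps k').mpr (by simp); have := (jumps l').mpr (by simp)
  obtain ⟨rfl, rfl⟩ : k = k' ∧ l = l' := by omega
  have at_k := congrFun hb k
  simp only [block, Set.mulIndicator_apply, Set.mem_Ico, le_refl, hkl, and_self,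
    if_true] at at_k
  exact ⟨at_k, rfl, rfl⟩

lemma cAdj_one_intvl (hz : z ≠ 1) (ha : 1 ≤ a) (hab : a < b) (hb : b ≤ m + 1) :
    cAdj m 1 (intvl m z a b) :=
  ⟨z, a, b, hz, ha, hab, hb, by rw [inv_one, mul_one]⟩

lemma cAdj_of_eq_intvl_mul {g v : Fin m → G} (hw : w ≠ 1) (hc : 1 ≤ c) (hcd : c < d)
    (hd : d ≤ m + 1) (h : v = intvl m w c d * g) : cAdj m g v :=
  ⟨w, c, d, hw, hc, hcd, hd, by rw [h, mul_inv_cancel_right]⟩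

end Coordinates

section WeightTwo

variable [Group G] {m : ℕ} {x y : G} {k l s : ℕ}

lemma mem_of_cAdj_one_of_cAdj {v : Fin m → G} (hx : x ≠ 1) (hy : y ≠ 1) (hxy : x ≠ y)
    (hk : 1 ≤ k) (hkl : k < l) (hls : l < s) (hs : s ≤ m + 1)
    (h_one : cAdj m 1 v) (h_g : cAdj m (intvl m x k l * intvl m y l s) v) :
    v ∈ ({intvl m y l s, intvl m y k s, intvl m x k l, intvl m x k s,
      intvl m (x⁻¹ * y) l s, intvl m (y⁻¹ * x) k l} : Set (Fin m → G)) := by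
  obtain ⟨z, a, b, hz, ha, hab, hb, hv⟩ := h_one
  obtain ⟨w, c, d, hw, hc, hcd, hd, hvw⟩ := h_g
  rw [inv_one, mul_one] at hv
  subst hv
  have hfac : intvl m x k l * intvl m y l s = intvl m w⁻¹ c d * intvl m z a b := by
    rw [← intvl_inv, ← hvw]
    group
  have hblocks := congrArg (extendByOne m) hfac
  simp only [map_mul] at hblocks
  rw [extendByOne_intvl hk (by omega), extendByOne_intvl (by omega) hs,
    extendByOne_intvl hc hd, extendByOne_intvl ha hb] at hblocks
  rcases right_factor_of_block_mul_block_eq hx hy hxy (inv_ne_one.mpr hw) hz hk hkl hls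
      hc hcd ha hab hblocks with
    ⟨rfl, rfl, rfl⟩ | ⟨rfl, rfl, rfl⟩ | ⟨rfl, rfl, rfl⟩ | ⟨rfl, rfl, rfl⟩ | ⟨rfl, rfl, rfl⟩ |
    ⟨rfl, rfl, rfl⟩ <;> simp

lemma cAdj_one_and_cAdj_of_mem {v : Fin m → G} (hx : x ≠ 1) (hy : y ≠ 1) (hxy : x ≠ y)
    (hk : 1 ≤ k) (hkl : k < l) (hls : l < s) (hs : s ≤ m + 1)
    (hv : v ∈ ({intvl m y l s, intvl m y k s, intvl m x k l, intvl m x k s,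
      intvl m (x⁻¹ * y) l s, intvl m (y⁻¹ * x) k l} : Set (Fin m → G))) :
    cAdj m 1 v ∧ cAdj m (intvl m x k l * intvl m y l s) v := by
  have hx' := inv_ne_one.mpr hx
  have hy' := inv_ne_one.mpr hy
  have hyx : y * x⁻¹ ≠ 1 := mt mul_inv_eq_one.mp hxy.symm
  have hxy' : x * y⁻¹ ≠ 1 := mt mul_inv_eq_one.mp hxy
  rcases hv with rfl | rfl | rfl | rfl | rfl | rfl <;> [
    refine ⟨cAdj_one_intvl hy (by omega) hls hs, cAdj_of_eq_intvl_mul hx' hk hkl (by omega) ?_⟩;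
    refine ⟨cAdj_one_intvl hy hk (by omega) hs, cAdj_of_eq_intvl_mul hyx hk hkl (by omega) ?_⟩;
    refine ⟨cAdj_one_intvl hx hk hkl (by omega), cAdj_of_eq_intvl_mul hy' (by omega) hls hs ?_⟩;
    refine ⟨cAdj_one_intvl hx hk (by omega) hs, cAdj_of_eq_intvl_mul hxy' (by omega) hls hs ?_⟩;
    refine ⟨cAdj_one_intvl (mt inv_mul_eq_one.mp hxy) (by omega) hls hs,
      cAdj_of_eq_intvl_mul hx' hk (by omega) hs ?_⟩;
    refine ⟨cAdj_one_intvl (mt inv_mul_eq_one.mp hxy.symm) hk hkl (by omega),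
      cAdj_of_eq_intvl_mul hy' hk (by omega) hs ?_⟩]
  all_goals
    ext i
    simp only [intvl, Pi.mul_apply]
    split_ifs <;> first | omega | group

lemma ncard_six_intvls (hx : x ≠ 1) (hy : y ≠ 1) (hxy : x ≠ y)
    (hk : 1 ≤ k) (hkl : k < l) (hls : l < s) (hs : s ≤ m + 1) :
    ({intvl m y l s, intvl m y k s, intvl m x k l, intvl m x k s,
      intvl m (x⁻¹ * y) l s, intvl m (y⁻¹ * x) k l} : Set (Fin m → G)).ncard = 6 := by
  have hxy' : x⁻¹ * y ≠ 1 := mt inv_mul_eq_one.mp hxy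
  have hyx' : y⁻¹ * x ≠ 1 := mt inv_mul_eq_one.mp hxy.symm
  rw [Set.ncard_insert_of_notMem, Set.ncard_insert_of_notMem, Set.ncard_insert_of_notMem,
    Set.ncard_insert_of_notMem, Set.ncard_insert_of_notMem, Set.ncard_singleton]
  all_goals
    simp only [Set.mem_insert_iff, Set.mem_singleton_iff, not_or]
    and_intros
  all_goals
    intro h
    obtain ⟨hval, hstart, hend⟩ := eq_of_intvl_eq (by assumption) (by assumption) (by omega)
      (by omega) (by omega) (by omega) (by omega) (by omega) h
    first | omega | (revert hval; simp [hx, hy, hxy.symm])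

end WeightTwo

theorem common_neighbours_weight_two [Group G] (m : ℕ)
    (x y : G) (hx : x ≠ 1) (hy : y ≠ 1) (hxy : x ≠ y)
    (k l s : ℕ) (hk : 1 ≤ k) (hkl : k < l) (hls : l < s) (hs : s ≤ m + 1) :
    {v : Fin m → G | cAdj m (1 : Fin m → G) v ∧
        cAdj m (intvl m x k l * intvl m y l s) v} =
      ({intvl m y l s, intvl m y k s, intvl m x k l, intvl m x k s,
        intvl m (x⁻¹ * y) l s, intvl m (y⁻¹ * x) k l} : Set (Fin m → G)) ∧
    {v : Fin m → G | cAdj m (1 : Fin m → G) v ∧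
        cAdj m (intvl m x k l * intvl m y l s) v}.ncard = 6 := by
  have hset : {v : Fin m → G | cAdj m 1 v ∧ cAdj m (intvl m x k l * intvl m y l s) v} = _ :=
    Set.ext fun v => ⟨fun hv => mem_of_cAdj_one_of_cAdj hx hy hxy hk hkl hls hs hv.1 hv.2,
      cAdj_one_and_cAdj_of_mem hx hy hxy hk hkl hls hs⟩
  exact ⟨hset, hset ▸ ncard_six_intvls hx hy hxy hk hkl hls hs⟩

end CayleyStmt5
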